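/- Let X, Z ∈ ℝ^{d×r} with XᵀX invertible, and suppose max_i g_i(X) ≤ g_max where g_i(X) = e_iᵀX(XᵀX)^{−1}Xᵀe_i. Then for SG(X) = 2d²·(XXᵀ−ZZᵀ)_{ij}·(e_ie_jᵀ + e_je_iᵀ)X with (i,j) uniform on [d]², the second moment satisfies E[(‖SG(X)‖_X*)²] ≤ 16·d²·g_max·‖XXᵀ−ZZᵀ‖_F², where ‖V‖_X* = ‖V(XᵀX)^{−1/2}‖_F. -/

import Mathlib

open Matrix BigOperators

noncomputable section

/-- Frobenius norm of a real matrix. -/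
def frob {m n : ℕ} (A : Matrix (Fin m) (Fin n) ℝ) : ℝ :=
  Real.sqrt (∑ i, ∑ j, (A i j) ^ 2)

/-- Trace inner product `⟨A,B⟩ = tr(AᵀB)`. -/
def mip {m n : ℕ} (A B : Matrix (Fin m) (Fin n) ℝ) : ℝ := (Aᵀ * B).trace

open Classical in
/-- Smallest eigenvalue of a Hermitian matrix (junk value 0 otherwise). -/
def lammin {n : ℕ} (M : Matrix (Fin n) (Fin n) ℝ) : ℝ :=
  if h : M.IsHermitian then ⨅ i, h.eigenvalues i else 0

open scoped ComplexOrder in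
/-- The positive semidefinite square root, as defined in the older Mathlib (removed since). -/
def Matrix.PosSemidef.sqrt {𝕜 : Type*} [RCLike 𝕜] {n : Type*} [Fintype n] [DecidableEq n]
    {A : Matrix n n 𝕜} (hA : A.PosSemidef) : Matrix n n 𝕜 :=
  hA.1.eigenvectorUnitary.1 * diagonal ((↑) ∘ (√·) ∘ hA.1.eigenvalues) *
  (star hA.1.eigenvectorUnitary : Matrix n n 𝕜)

/-- Local norm `‖V‖_X = ‖V (XᵀX)^{1/2}‖_F`. -/
def locNorm {d r : ℕ} (X V : Matrix (Fin d) (Fin r) ℝ) : ℝ :=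
  frob (V * (Matrix.posSemidef_conjTranspose_mul_self X).sqrt)

/-- Dual local norm `‖V‖_X* = ‖V (XᵀX)^{-1/2}‖_F`. -/
def dualNorm {d r : ℕ} (X V : Matrix (Fin d) (Fin r) ℝ) : ℝ :=
  frob (V * ((Matrix.posSemidef_conjTranspose_mul_self X).sqrt)⁻¹)

/-- Leverage score / coherence `g_k(X) = e_kᵀ X (XᵀX)⁻¹ Xᵀ e_k`. -/
def lev {d r : ℕ} (k : Fin d) (X : Matrix (Fin d) (Fin r) ℝ) : ℝ :=
  (X * (Xᴴ * X)⁻¹ * Xᴴ) k k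

/-- Gradient of the leverage score `∇g_k(X)`. -/
def levGrad {d r : ℕ} (k : Fin d) (X : Matrix (Fin d) (Fin r) ℝ) :
    Matrix (Fin d) (Fin r) ℝ :=
  (2 : ℝ) • ((1 - X * (Xᴴ * X)⁻¹ * Xᴴ) * Matrix.single k k (1 : ℝ) * X * (Xᴴ * X)⁻¹)

/-- Stochastic gradient sample `SG(X)` for the index pair `(i,j)`. -/
def SG {d r : ℕ} (X Z : Matrix (Fin d) (Fin r) ℝ) (i j : Fin d) :
    Matrix (Fin d) (Fin r) ℝ :=
  (2 * (d : ℝ) ^ 2 * ((X * Xᴴ - Z * Zᴴ) i j)) •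
    ((Matrix.single i j (1 : ℝ) + Matrix.single j i (1 : ℝ)) * X)

/-!
Put `Y = X (XᵀX)^{-1/2}`. Then `Y Yᵀ = X (XᵀX)⁻¹ Xᵀ`, so the leverage score `g_k(X)` is the
squared norm of the `k`-th row of `Y`, and `‖V‖_X* = ‖V (XᵀX)^{-1/2}‖_F` turns the dual norm of
`(e_i e_jᵀ + e_j e_iᵀ) X` into the Frobenius norm of `(e_i e_jᵀ + e_j e_iᵀ) Y`, the sum of row `j`
of `Y` moved to row `i` and row `i` moved to row `j`. By `‖A + B‖² ≤ 2‖A‖² + 2‖B‖²` its squared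
norm is at most `4 g_max`, and summing `(2d² (XXᵀ - ZZᵀ)_{ij})² · 4 g_max` over all pairs gives
`16 d⁴ g_max ‖XXᵀ - ZZᵀ‖_F²`.
-/

open scoped ComplexOrder in
theorem Matrix.PosSemidef.sqrt_conjTranspose {𝕜 : Type*} [RCLike 𝕜] {n : Type*} [Fintype n]
    [DecidableEq n] {A : Matrix n n 𝕜} (hA : A.PosSemidef) : hA.sqrtᴴ = hA.sqrt := by
  simp only [Matrix.PosSemidef.sqrt, conjTranspose_mul, Matrix.mul_assoc, star_eq_conjTranspose,
    conjTranspose_conjTranspose, diagonal_conjTranspose]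
  congr 3
  funext i
  simp

open scoped ComplexOrder in
theorem Matrix.PosSemidef.sqrt_mul_self {𝕜 : Type*} [RCLike 𝕜] {n : Type*} [Fintype n]
    [DecidableEq n] {A : Matrix n n 𝕜} (hA : A.PosSemidef) : hA.sqrt * hA.sqrt = A := by
  conv_rhs => rw [hA.1.spectral_theorem, Unitary.conjStarAlgAut_apply]
  have hU : (star hA.1.eigenvectorUnitary : Matrix n n 𝕜) * hA.1.eigenvectorUnitary.1 = 1 :=
    Unitary.star_mul_self_of_mem hA.1.eigenvectorUnitary.2
  simp only [Matrix.PosSemidef.sqrt, Matrix.mul_assoc]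
  rw [← Matrix.mul_assoc (star _ : Matrix _ _ 𝕜) _ _, hU, Matrix.one_mul,
    ← Matrix.mul_assoc (diagonal _), diagonal_mul_diagonal]
  congr 3
  funext i
  simp [← RCLike.ofReal_mul, Real.mul_self_sqrt (hA.eigenvalues_nonneg i)]

theorem frob_sq {m n : ℕ} (A : Matrix (Fin m) (Fin n) ℝ) :
    frob A ^ 2 = ∑ i, ∑ j, A i j ^ 2 :=
  Real.sq_sqrt (by positivity)

theorem frob_smul_sq {m n : ℕ} (c : ℝ) (A : Matrix (Fin m) (Fin n) ℝ) :
    frob (c • A) ^ 2 = c ^ 2 * frob A ^ 2 := by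
  simp only [frob_sq, Matrix.smul_apply, smul_eq_mul, mul_pow, Finset.mul_sum]

theorem frob_add_sq_le {m n : ℕ} (A B : Matrix (Fin m) (Fin n) ℝ) :
    frob (A + B) ^ 2 ≤ 2 * (frob A ^ 2 + frob B ^ 2) := by
  simp only [frob_sq, Matrix.add_apply, ← Finset.sum_add_distrib, Finset.mul_sum]
  gcongr
  exact add_sq_le

theorem frob_single_one_mul_sq {d r : ℕ} (i j : Fin d) (Y : Matrix (Fin d) (Fin r) ℝ) :
    frob (single i j (1 : ℝ) * Y) ^ 2 = ∑ l, Y j l ^ 2 := by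
  simp [frob_sq, Matrix.mul_apply, Matrix.single, ite_and, eq_comm, apply_ite (· ^ 2)]

theorem frob_sq_single_add_single_mul_le {d r : ℕ} {Y : Matrix (Fin d) (Fin r) ℝ} {g : ℝ}
    (hY : ∀ k, ∑ l, Y k l ^ 2 ≤ g) (i j : Fin d) :
    frob ((single i j (1 : ℝ) + single j i 1) * Y) ^ 2 ≤ 4 * g := by
  rw [Matrix.add_mul]
  calc _ ≤ 2 * (frob (single i j (1 : ℝ) * Y) ^ 2 + frob (single j i (1 : ℝ) * Y) ^ 2) :=
        frob_add_sq_le _ _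
    _ ≤ 4 * g := by
        rw [frob_single_one_mul_sq, frob_single_one_mul_sq]
        linarith [hY i, hY j]

theorem lev_eq_sum_sq {d r : ℕ} (k : Fin d) (X : Matrix (Fin d) (Fin r) ℝ) :
    lev k X = ∑ l, (X * (posSemidef_conjTranspose_mul_self X).sqrt⁻¹) k l ^ 2 := by
  set hXX := posSemidef_conjTranspose_mul_self X
  have hinv : (Xᴴ * X)⁻¹ = hXX.sqrt⁻¹ * hXX.sqrt⁻¹ := by
    rw [← Matrix.mul_inv_rev, hXX.sqrt_mul_self]
  have hgram : X * (Xᴴ * X)⁻¹ * Xᴴ = (X * hXX.sqrt⁻¹) * (X * hXX.sqrt⁻¹)ᴴ := by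
    rw [conjTranspose_mul, conjTranspose_nonsing_inv, hXX.sqrt_conjTranspose, hinv,
      Matrix.mul_assoc, Matrix.mul_assoc, Matrix.mul_assoc]
  rw [lev, hgram, Matrix.mul_apply]
  simp only [conjTranspose_apply, star_trivial, sq]

theorem dualNorm_SG_sq {d r : ℕ} (X Z : Matrix (Fin d) (Fin r) ℝ) (i j : Fin d) :
    dualNorm X (SG X Z i j) ^ 2 = (2 * (d : ℝ) ^ 2 * (X * Xᴴ - Z * Zᴴ) i j) ^ 2 *
      frob ((single i j (1 : ℝ) + single j i 1) *
        (X * (posSemidef_conjTranspose_mul_self X).sqrt⁻¹)) ^ 2 := by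
  rw [dualNorm, SG, smul_mul, frob_smul_sq, Matrix.mul_assoc]

theorem dualNorm_SG_sq_le {d r : ℕ} {X : Matrix (Fin d) (Fin r) ℝ} {g : ℝ}
    (hg : ∀ k, lev k X ≤ g) (Z : Matrix (Fin d) (Fin r) ℝ) (i j : Fin d) :
    dualNorm X (SG X Z i j) ^ 2 ≤ 16 * (d : ℝ) ^ 4 * g * (X * Xᴴ - Z * Zᴴ) i j ^ 2 := by
  have hrows := frob_sq_single_add_single_mul_le (fun k ↦ lev_eq_sum_sq k X ▸ hg k) i j
  calc _ = _ := dualNorm_SG_sq X Z i j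
    _ ≤ (2 * (d : ℝ) ^ 2 * (X * Xᴴ - Z * Zᴴ) i j) ^ 2 * (4 * g) := by gcongr
    _ = _ := by ring

theorem SG_second_moment_general {d r : ℕ} (X Z : Matrix (Fin d) (Fin r) ℝ) (gmax : ℝ)
    (hg : ∀ i, lev i X ≤ gmax) :
    ((d : ℝ) ^ 2)⁻¹ * ∑ i : Fin d, ∑ j : Fin d, dualNorm X (SG X Z i j) ^ 2
      ≤ 16 * (d : ℝ) ^ 2 * gmax * frob (X * Xᴴ - Z * Zᴴ) ^ 2 := by
  have hsum : ∑ i : Fin d, ∑ j : Fin d, dualNorm X (SG X Z i j) ^ 2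
      ≤ 16 * (d : ℝ) ^ 4 * gmax * frob (X * Xᴴ - Z * Zᴴ) ^ 2 := by
    simp only [frob_sq, Finset.mul_sum]
    gcongr with i _ j _
    exact dualNorm_SG_sq_le hg Z i j
  calc _ ≤ ((d : ℝ) ^ 2)⁻¹ * (16 * (d : ℝ) ^ 4 * gmax * frob (X * Xᴴ - Z * Zᴴ) ^ 2) := by
        gcongr
    _ = 16 * (d : ℝ) ^ 2 * gmax * frob (X * Xᴴ - Z * Zᴴ) ^ 2 := by
        rcases eq_or_ne (d : ℝ) 0 with hd | hd
        · simp [hd]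
        · field_simp

/-- Second-moment bound on the stochastic gradient in the dual local norm. -/
theorem SG_second_moment {d r : ℕ} (X Z : Matrix (Fin d) (Fin r) ℝ) (gmax : ℝ)
    (hX : IsUnit (Xᴴ * X).det) (hg : ∀ i, lev i X ≤ gmax) :
    ((d : ℝ) ^ 2)⁻¹ * ∑ i : Fin d, ∑ j : Fin d, dualNorm X (SG X Z i j) ^ 2
      ≤ 16 * (d : ℝ) ^ 2 * gmax * frob (X * Xᴴ - Z * Zᴴ) ^ 2 :=
  SG_second_moment_general X Z gmax hg
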